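/- For every real number t, Φ(t) = Φ(−t), where Φ(t) = Σ_{n=1}^{∞} (2π² n⁴ e^{9t/4} − 3π n² e^{5t/4}) e^{−π n² e^t}. -/

import Mathlib

/-!
Put `G(t) = e^{t/4} θ(e^t) = ∑_{n ∈ ℤ} exp (t/4 - π n² e^t)` (`scaledTheta`). The functional
equation `θ(1/x) = √x θ(x)` says exactly that `G` is even. Differentiating termwise twice,
`G'' - G/16 = ∑_{n ∈ ℤ} (π² n⁴ e^{9t/4} - (3/2) π n² e^{5t/4}) e^{-π n² e^t}`, which is `Φ`
because the summand is even in `n` and vanishes at `n = 0`. The second derivative of an even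
function is even.
-/

open Real

/-- The Riemann xi kernel
`Φ(t) = ∑_{n=1}^{∞} (2π² n⁴ e^{9t/4} − 3π n² e^{5t/4}) e^{−π n² e^t}`. -/
noncomputable def Phi (t : ℝ) : ℝ :=
  ∑' n : ℕ,
    (2 * π ^ 2 * (n + 1 : ℝ) ^ 4 * exp (9 * t / 4)
      - 3 * π * (n + 1 : ℝ) ^ 2 * exp (5 * t / 4)) * exp (-π * (n + 1 : ℝ) ^ 2 * exp t)

section EvenOdd

variable {𝕜 F : Type*} [NontriviallyNormedField 𝕜] [NormedAddCommGroup F] [NormedSpace 𝕜 F]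
  {f : 𝕜 → F}

theorem Function.Even.odd_deriv (hf : f.Even) : (deriv f).Odd := fun x => by
  have h := deriv_comp_neg f x
  rw [show (fun y => f (-y)) = f from funext hf] at h
  rw [h, neg_neg]

theorem Function.Odd.even_deriv (hf : f.Odd) : (deriv f).Even := fun x => by
  have h := deriv_comp_neg f x
  rwa [show (fun y => f (-y)) = fun y => -f y from funext hf, deriv.fun_neg, neg_inj, eq_comm] at h

end EvenOdd

theorem hasDerivAt_tsum_of_locally_summable_bound {ι : Type*} {f f' : ι → ℝ → ℝ}
    (hf : ∀ n t, HasDerivAt (f n) (f' n t) t)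
    (hf' : ∀ R, ∃ u : ι → ℝ, Summable u ∧ ∀ n t, |t| ≤ R → ‖f' n t‖ ≤ u n)
    {t : ℝ} (hsum : Summable fun n => f n t) :
    HasDerivAt (fun s => ∑' n, f n s) (∑' n, f' n t) t := by
  obtain ⟨u, hu, hbound⟩ := hf' (|t| + 1)
  have hmem : t ∈ Set.Ioo (-(|t| + 1)) (|t| + 1) := by
    rw [Set.mem_Ioo, ← abs_lt]; linarith
  refine hasDerivAt_tsum_of_isPreconnected hu isOpen_Ioo isPreconnected_Ioo
    (fun n s _ => hf n s) (fun n s hs => hbound n s ?_) hmem hsum hmem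
  rw [Set.mem_Ioo, ← abs_lt] at hs
  exact hs.le

noncomputable def thetaTerm (a t : ℝ) : ℝ := exp (t / 4 - a * exp t)

noncomputable def thetaMajorant (R a : ℝ) : ℝ := (1 + a * exp R) ^ 2 * exp (R - exp (-R) * a)

noncomputable def scaledTheta (t : ℝ) : ℝ := ∑' n : ℤ, thetaTerm (π * n ^ 2) t

section ThetaTerm

variable {a R t : ℝ}

theorem hasDerivAt_thetaTerm (a t : ℝ) :
    HasDerivAt (thetaTerm a) ((1 / 4 - a * exp t) * thetaTerm a t) t := by
  have h : HasDerivAt (fun s => s / 4 - a * exp s) (1 / 4 - a * exp t) t :=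
    ((hasDerivAt_id' t).div_const 4).fun_sub ((hasDerivAt_exp t).const_mul a)
  exact h.exp.congr_deriv (mul_comm _ _)

theorem hasDerivAt_deriv_thetaTerm (a t : ℝ) :
    HasDerivAt (fun s => (1 / 4 - a * exp s) * thetaTerm a s)
      (((1 / 4 - a * exp t) ^ 2 - a * exp t) * thetaTerm a t) t :=
  (((hasDerivAt_exp t).const_mul a).const_sub (1 / 4)).fun_mul (hasDerivAt_thetaTerm a t)
    |>.congr_deriv (by ring)

theorem thetaTerm_pos (a t : ℝ) : 0 < thetaTerm a t := exp_pos _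

theorem thetaTerm_le (ha : 0 ≤ a) (ht : |t| ≤ R) : thetaTerm a t ≤ exp (R - exp (-R) * a) := by
  obtain ⟨hRt, htR⟩ := abs_le.mp ht
  have : exp (-R) * a ≤ a * exp t := by
    rw [mul_comm]; exact mul_le_mul_of_nonneg_left (exp_le_exp.mpr hRt) ha
  exact exp_le_exp.mpr (by linarith)

theorem norm_mul_thetaTerm_le (ha : 0 ≤ a) (ht : |t| ≤ R) {p : ℝ}
    (hp : |p| ≤ (1 + a * exp R) ^ 2) : ‖p * thetaTerm a t‖ ≤ thetaMajorant R a := by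
  rw [norm_mul, Real.norm_eq_abs, Real.norm_eq_abs, abs_of_pos (thetaTerm_pos a t)]
  exact mul_le_mul hp (thetaTerm_le ha ht) (thetaTerm_pos a t).le (sq_nonneg _)

theorem abs_thetaTerm_deriv_coeffs_le (ha : 0 ≤ a) (ht : |t| ≤ R) :
    |1 / 4 - a * exp t| ≤ (1 + a * exp R) ^ 2 ∧
      |(1 / 4 - a * exp t) ^ 2 - a * exp t| ≤ (1 + a * exp R) ^ 2 := by
  have h0 : 0 ≤ a * exp t := by positivity
  have h1 : a * exp t ≤ a * exp R :=
    mul_le_mul_of_nonneg_left (exp_le_exp.mpr (abs_le.mp ht).2) ha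
  constructor <;> rw [abs_le] <;> constructor <;> nlinarith

end ThetaTerm

section ScaledTheta

variable {R t : ℝ}

theorem summable_thetaMajorant (R : ℝ) : Summable fun n : ℤ => thetaMajorant R (π * n ^ 2) := by
  have h k := summable_pow_mul_jacobiTheta₂_term_bound 0 (exp_pos (-R)) k
  refine ((((h 0).add ((h 2).mul_left (2 * π * exp R))).add
    ((h 4).mul_left ((π * exp R) ^ 2))).mul_left (exp R)).congr fun n => ?_
  simp only [thetaMajorant, Int.cast_abs, mul_zero, zero_mul, sub_zero, pow_zero, one_mul]
  rw [← sq_abs (n : ℝ), show R - exp (-R) * (π * |(n : ℝ)| ^ 2)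
    = R + -π * (exp (-R) * |(n : ℝ)| ^ 2) by ring, exp_add]
  ring

theorem summable_mul_thetaTerm {p : ℤ → ℝ} (ht : |t| ≤ R)
    (hp : ∀ n : ℤ, |p n| ≤ (1 + π * n ^ 2 * exp R) ^ 2) :
    Summable fun n : ℤ => p n * thetaTerm (π * n ^ 2) t :=
  (summable_thetaMajorant R).of_norm_bounded fun n =>
    norm_mul_thetaTerm_le (by positivity) ht (hp n)

theorem summable_thetaTerm (t : ℝ) : Summable fun n : ℤ => thetaTerm (π * n ^ 2) t := by
  simpa using summable_mul_thetaTerm (p := 1) le_rfl fun n =>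
    by rw [Pi.one_apply, abs_one]; exact one_le_pow₀ (le_add_of_nonneg_right (by positivity))

theorem hasDerivAt_scaledTheta (t : ℝ) :
    HasDerivAt scaledTheta (∑' n : ℤ, (1 / 4 - π * n ^ 2 * exp t) * thetaTerm (π * n ^ 2) t) t :=
  hasDerivAt_tsum_of_locally_summable_bound (fun n => hasDerivAt_thetaTerm _)
    (fun R => ⟨_, summable_thetaMajorant R, fun _ _ hs => norm_mul_thetaTerm_le (by positivity) hs
      (abs_thetaTerm_deriv_coeffs_le (by positivity) hs).1⟩)
    (summable_thetaTerm t)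

theorem hasDerivAt_deriv_scaledTheta (t : ℝ) :
    HasDerivAt (deriv scaledTheta)
      (∑' n : ℤ, ((1 / 4 - π * n ^ 2 * exp t) ^ 2 - π * n ^ 2 * exp t) *
        thetaTerm (π * n ^ 2) t) t := by
  rw [show deriv scaledTheta = _ from funext fun s => (hasDerivAt_scaledTheta s).deriv]
  exact hasDerivAt_tsum_of_locally_summable_bound (fun n => hasDerivAt_deriv_thetaTerm _)
    (fun R => ⟨_, summable_thetaMajorant R, fun _ _ hs => norm_mul_thetaTerm_le (by positivity) hs
      (abs_thetaTerm_deriv_coeffs_le (by positivity) hs).2⟩)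
    (summable_mul_thetaTerm le_rfl fun _ =>
      (abs_thetaTerm_deriv_coeffs_le (by positivity) le_rfl).1)

theorem scaledTheta_eq (t : ℝ) :
    scaledTheta t = exp (t / 4) * ∑' n : ℤ, exp (-π * exp t * n ^ 2) := by
  rw [scaledTheta, ← tsum_mul_left]
  congr 1 with n
  rw [thetaTerm, ← exp_add]
  ring_nf

theorem scaledTheta_even : scaledTheta.Even := fun t => by
  have hsqrt : exp (-t) ^ (1 / 2 : ℝ) = exp (-t / 2) := by
    rw [← exp_mul]; ring_nf
  rw [scaledTheta_eq, scaledTheta_eq, tsum_exp_neg_mul_int_sq (exp_pos _), hsqrt, exp_neg t,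
    div_inv_eq_mul, one_div, ← exp_neg, ← mul_assoc, ← exp_add]
  ring_nf

end ScaledTheta

theorem two_mul_thetaTerm_combination (x t : ℝ) :
    2 * (((1 / 4 - π * x ^ 2 * exp t) ^ 2 - π * x ^ 2 * exp t - 1 / 16) * thetaTerm (π * x ^ 2) t)
      = (2 * π ^ 2 * x ^ 4 * exp (9 * t / 4) - 3 * π * x ^ 2 * exp (5 * t / 4)) *
          exp (-π * x ^ 2 * exp t) := by
  have h9 : exp (9 * t / 4) = exp t ^ 2 * exp (t / 4) := by
    rw [← exp_nat_mul, ← exp_add]; ring_nf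
  have h5 : exp (5 * t / 4) = exp t * exp (t / 4) := by
    rw [← exp_add]; ring_nf
  rw [thetaTerm, show t / 4 - π * x ^ 2 * exp t = t / 4 + -π * x ^ 2 * exp t by ring, exp_add,
    h9, h5]
  ring

theorem Phi_eq_deriv_deriv_scaledTheta_sub (t : ℝ) :
    Phi t = deriv (deriv scaledTheta) t - scaledTheta t / 16 := by
  set f : ℤ → ℝ := fun n =>
    ((1 / 4 - π * n ^ 2 * exp t) ^ 2 - π * n ^ 2 * exp t - 1 / 16) * thetaTerm (π * n ^ 2) t
  have hf_even : f.Even := fun n => by simp only [f, Int.cast_neg, neg_sq]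
  have hsum₂ := summable_mul_thetaTerm (t := t) le_rfl fun _ =>
    (abs_thetaTerm_deriv_coeffs_le (by positivity) le_rfl).2
  have hsum : Summable f := (hsum₂.sub ((summable_thetaTerm t).div_const 16)).congr fun n => by
    simp only [f]; ring
  have hf0 : f 0 = 0 := by norm_num [f]
  calc Phi t = ∑' n : ℤ, f n := by
        rw [tsum_int_eq_zero_add_two_mul_tsum_pnat hf_even hsum, hf0, zero_add,
          tsum_pnat_eq_tsum_succ (f := fun n : ℕ => f n), Phi, nsmul_eq_mul, Nat.cast_ofNat,
          ← tsum_mul_left]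
        refine tsum_congr fun n => ?_
        rw [← two_mul_thetaTerm_combination]
        simp only [f]
        push_cast
        rfl
    _ = deriv (deriv scaledTheta) t - scaledTheta t / 16 := by
        rw [(hasDerivAt_deriv_scaledTheta t).deriv, scaledTheta, ← tsum_div_const,
          ← hsum₂.tsum_sub ((summable_thetaTerm t).div_const 16)]
        exact tsum_congr fun n => by simp only [f]; ring

/-- The Riemann xi kernel is even: `Φ(t) = Φ(−t)` for every real `t`. -/
theorem Phi_even (t : ℝ) : Phi t = Phi (-t) := by
  rw [Phi_eq_deriv_deriv_scaledTheta_sub, Phi_eq_deriv_deriv_scaledTheta_sub,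
    scaledTheta_even.odd_deriv.even_deriv t, scaledTheta_even t]
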